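/- Let G be an interval graph and let S and S' be c-colorable vertex sets of size at least k in G. If neither S nor S' is a maximal c-colorable set of size exactly k in the induced subgraph G[S ∪ S'], then the minimum length of a TAR(k)-reconfiguration sequence between S and S' equals |S △ S'|. -/

import Mathlib

open Finset

variable {V : Type*}

/-- `S` is a `c`-colorable vertex set in `G`. -/
def ColSet (G : SimpleGraph V) (c : ℕ) (S : Finset V) : Prop :=
  (G.induce (S : Set V)).Colorable c

/-- One TAR(k) step between `c`-colorable sets. -/
def TARStep (G : SimpleGraph V) (c k : ℕ) [DecidableEq V] (A B : Finset V) : Prop :=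
  ColSet G c A ∧ ColSet G c B ∧ k ≤ A.card ∧ k ≤ B.card ∧ (symmDiff A B).card = 1

/-- One TJ step between `c`-colorable sets. -/
def TJStep (G : SimpleGraph V) (c : ℕ) [DecidableEq V] (A B : Finset V) : Prop :=
  ColSet G c A ∧ ColSet G c B ∧ (A \ B).card = 1 ∧ (B \ A).card = 1

/-- `l` is a TAR(k)-reconfiguration sequence from `S` to `S'`. -/
def TARSeq (G : SimpleGraph V) (c k : ℕ) [DecidableEq V] (S S' : Finset V)
    (l : List (Finset V)) : Prop :=
  l.head? = some S ∧ l.getLast? = some S' ∧ l.Chain' (TARStep G c k)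

def TJSeq (G : SimpleGraph V) (c : ℕ) [DecidableEq V] (S S' : Finset V)
    (l : List (Finset V)) : Prop :=
  l.head? = some S ∧ l.getLast? = some S' ∧ l.Chain' (TJStep G c)

def TARReach (G : SimpleGraph V) (c k : ℕ) [DecidableEq V] (S S' : Finset V) : Prop :=
  ∃ l, TARSeq G c k S S' l

def TJReach (G : SimpleGraph V) (c : ℕ) [DecidableEq V] (S S' : Finset V) : Prop :=
  ∃ l, TJSeq G c S S' l

/-- Length of a shortest TAR(k)-sequence (number of steps), `⊤` if none exists. -/
noncomputable def TARDist (G : SimpleGraph V) (c k : ℕ) [DecidableEq V]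
    (S S' : Finset V) : ℕ∞ :=
  sInf {n : ℕ∞ | ∃ l, TARSeq G c k S S' l ∧ (l.length : ℕ∞) = n + 1}

noncomputable def TJDist (G : SimpleGraph V) (c : ℕ) [DecidableEq V]
    (S S' : Finset V) : ℕ∞ :=
  sInf {n : ℕ∞ | ∃ l, TJSeq G c S S' l ∧ (l.length : ℕ∞) = n + 1}

/-- `S` is a maximal `c`-colorable set among subsets of `U`, of size exactly `k`
(`S` is "locked" in `G[U]`). -/
def LockedIn (G : SimpleGraph V) (c k : ℕ) (U S : Finset V) : Prop :=
  S.card = k ∧ ColSet G c S ∧ S ⊆ U ∧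
    ∀ T ⊆ U, ColSet G c T → S ⊆ T → T = S

/-- `S` is locked in `G` itself. -/
def Locked [Fintype V] (G : SimpleGraph V) (c k : ℕ) (S : Finset V) : Prop :=
  LockedIn G c k Finset.univ S

/-- `G` is an interval graph. -/
def IsIntervalGraph (G : SimpleGraph V) : Prop :=
  ∃ l r : V → ℝ, (∀ v, l v ≤ r v) ∧
    ∀ u v, G.Adj u v ↔ u ≠ v ∧ max (l u) (l v) ≤ min (r u) (r v)

/-- `G` is perfect: every induced subgraph has chromatic number equal to its
clique number, stated via the colorability/clique-free characterization. -/
def IsPerfect (G : SimpleGraph V) : Prop :=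
  ∀ (S : Set V) (c : ℕ), (G.induce S).Colorable c ↔ (G.induce S).CliqueFree (c + 1)

/-!
Each TAR step changes `S ∆ S'` by one vertex, so at least `|S ∆ S'|` steps are needed.
Conversely, as long as `S ≠ S'` one of the two sets can be moved one vertex towards the other
while both keep size `≥ k` and stay unlocked in their union: add a vertex of the other set when
possible; otherwise both have size `> k` (an unlocked set of size `k` can grow), and a vertex of
`S \ S'` can be deleted unless every such deletion leaves a locked set, i.e. no vertex of
`S' \ S` can be swapped in. Suppose this fails on both sides. In an interval graph a vertex set is
`c`-colourable iff every point lies in at most `c` of its intervals, so the interval of each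
`v ∈ S' \ S` contains points where `S` is saturated, and not all of them lie in the interval of
any `u ∈ S \ S'`. Matching each `v` greedily to an interval of `S \ S'` through its leftmost
saturated point gives `|S' \ S| < |S \ S'|`; by symmetry also `|S \ S'| < |S' \ S|`.
-/

open scoped symmDiff

section Coloring

variable {G : SimpleGraph V} {c : ℕ} {S T : Finset V} {v : V}

theorem colSet_iff_exists_bounded_coloring :
    ColSet G c S ↔
      ∃ f : V → ℕ, (∀ v ∈ S, f v < c) ∧ ∀ u ∈ S, ∀ w ∈ S, G.Adj u w → f u ≠ f w := by
  classical
  rw [ColSet, SimpleGraph.colorable_iff_exists_bdd_nat_coloring]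
  constructor
  · rintro ⟨C, hC⟩
    refine ⟨fun v => if h : v ∈ S then C ⟨v, h⟩ else 0, fun v hv => by simpa [hv] using hC ⟨v, hv⟩,
      fun u hu w hw huw => ?_⟩
    simpa [hu, hw] using C.valid (show (G.induce (S : Set V)).Adj ⟨u, hu⟩ ⟨w, hw⟩ from huw)
  · rintro ⟨f, hlt, hf⟩
    exact ⟨.mk (fun v => f v) fun {u w} huw => hf u u.2 w w.2 huw, fun v => hlt v v.2⟩

theorem ColSet.mono (hTS : T ⊆ S) (hS : ColSet G c S) : ColSet G c T :=
  hS.of_hom (SimpleGraph.induceHomOfLE G (coe_subset.mpr hTS)).toHom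

theorem ColSet.card_le_of_isClique (hS : ColSet G c S) (hTS : T ⊆ S)
    (hT : G.IsClique (T : Set V)) : #T ≤ c := by
  obtain ⟨f, hlt, hf⟩ := colSet_iff_exists_bounded_coloring.mp hS
  calc #T ≤ #(range c) := card_le_card_of_injOn f
        (fun v hv => mem_range.mpr (hlt v (hTS hv)))
        (fun u hu w hw hfuw => by_contra fun huw => hf u (hTS hu) w (hTS hw) (hT hu hw huw) hfuw)
    _ = c := card_range c

theorem ColSet.insert [DecidableEq V] (hS : ColSet G c S) {N : Finset V}
    (hN : ∀ w ∈ S, G.Adj v w → w ∈ N) (hlt : #N < c) : ColSet G c (insert v S) := by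
  obtain ⟨f, hfc, hf⟩ := colSet_iff_exists_bounded_coloring.mp hS
  obtain ⟨i, hi, hiN⟩ := exists_mem_notMem_of_card_lt_card
    (card_image_le.trans_lt (hlt.trans_eq (card_range c).symm) : #(N.image f) < #(range c))
  have hfree : ∀ w ∈ S, G.Adj v w → i ≠ f w := fun w hw hvw h =>
    hiN (mem_image.mpr ⟨w, hN w hw hvw, h.symm⟩)
  refine colSet_iff_exists_bounded_coloring.mpr ⟨Function.update f v i, fun u hu => ?_, ?_⟩
  · by_cases huv : u = v
    · simpa [huv] using mem_range.mp hi
    · simpa [huv] using hfc u ((mem_insert.mp hu).resolve_left huv)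
  · intro u hu w hw huw
    by_cases huv : u = v <;> by_cases hwv : w = v
    · subst huv hwv
      exact absurd huw (G.loopless.irrefl _)
    · subst huv
      simpa [hwv] using hfree w ((mem_insert.mp hw).resolve_left hwv) huw
    · subst hwv
      simpa [huv] using (hfree u ((mem_insert.mp hu).resolve_left huv) huw.symm).symm
    · simpa [huv, hwv] using
        hf u ((mem_insert.mp hu).resolve_left huv) w ((mem_insert.mp hw).resolve_left hwv) huw

end Coloring

theorem exists_isLeast_of_forall_exists_le {α : Type*} [LinearOrder α] {P : Set α}
    (F : Finset α) (hP : P.Nonempty) (h : ∀ x ∈ P, ∃ y ∈ F, y ∈ P ∧ y ≤ x) :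
    ∃ a, IsLeast P a := by
  classical
  obtain ⟨x₀, hx₀⟩ := hP
  obtain ⟨y₀, hy₀F, hy₀P, -⟩ := h x₀ hx₀
  have hne : {y ∈ F | y ∈ P}.Nonempty := ⟨y₀, mem_filter.mpr ⟨hy₀F, hy₀P⟩⟩
  refine ⟨_, (mem_filter.mp (min'_mem _ hne)).2, fun x hx => ?_⟩
  obtain ⟨y, hyF, hyP, hyx⟩ := h x hx
  exact (min'_le _ y (mem_filter.mpr ⟨hyF, hyP⟩)).trans hyx

theorem exists_isGreatest_of_forall_exists_ge {α : Type*} [LinearOrder α] {P : Set α}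
    (F : Finset α) (hP : P.Nonempty) (h : ∀ x ∈ P, ∃ y ∈ F, y ∈ P ∧ x ≤ y) :
    ∃ a, IsGreatest P a :=
  exists_isLeast_of_forall_exists_le (α := αᵒᵈ) (P := P) F hP h

section Interval

structure IsIntervalModel (G : SimpleGraph V) (l r : V → ℝ) : Prop where
  le : ∀ v, l v ≤ r v
  adj_iff : ∀ u v, G.Adj u v ↔ u ≠ v ∧ max (l u) (l v) ≤ min (r u) (r v)

variable {l r : V → ℝ} {S S' T : Finset V} {c : ℕ} {u v : V} {x : ℝ}

noncomputable def cover (l r : V → ℝ) (S : Finset V) (x : ℝ) : Finset V :=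
  {v ∈ S | x ∈ Set.Icc (l v) (r v)}

@[simp]
theorem mem_cover : v ∈ cover l r S x ↔ v ∈ S ∧ x ∈ Set.Icc (l v) (r v) :=
  mem_filter

theorem cover_mono (h : S ⊆ T) : cover l r S x ⊆ cover l r T x :=
  filter_subset_filter _ h

theorem cover_insert [DecidableEq V] :
    cover l r (insert v S) x =
      if x ∈ Set.Icc (l v) (r v) then insert v (cover l r S x) else cover l r S x :=
  filter_insert _ _ _

theorem card_cover_sdiff_add_card_cover_inter [DecidableEq V] :
    #(cover l r (S \ T) x) + #(cover l r (S ∩ T) x) = #(cover l r S x) := by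
  rw [← card_sdiff_add_card_inter (cover l r S x) T]
  congr 2 <;> ext <;> simp [and_right_comm]

def saturated (l r : V → ℝ) (S : Finset V) (c : ℕ) (v : V) : Set ℝ :=
  {x ∈ Set.Icc (l v) (r v) | c ≤ #(cover l r S x)}

/-- Moving a saturated point left to the last left endpoint before it keeps it saturated. -/
theorem exists_isLeast_saturated [DecidableEq V] (hx : x ∈ saturated l r S c v) :
    ∃ a, IsLeast (saturated l r S c v) a := by
  refine exists_isLeast_of_forall_exists_le ((insert v S).image l) ⟨x, hx⟩ fun x hx => ?_
  have hC : (insert v (cover l r S x)).Nonempty := insert_nonempty _ _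
  set y := (insert v (cover l r S x)).sup' hC l
  obtain ⟨w, hwC, hwy⟩ := exists_mem_eq_sup' hC l
  have hyx : y ≤ x := sup'_le _ _ fun w hw => by
    rcases mem_insert.mp hw with rfl | hw
    exacts [hx.1.1, (mem_cover.mp hw).2.1]
  refine ⟨y, mem_image.mpr ⟨w, insert_subset_insert v (filter_subset _ _) hwC, hwy.symm⟩,
    ⟨⟨le_sup' l (mem_insert_self v _), hyx.trans hx.1.2⟩, hx.2.trans (card_le_card fun u hu => ?_)⟩,
    hyx⟩
  exact mem_cover.mpr ⟨(mem_cover.mp hu).1, le_sup' l (mem_insert_of_mem hu),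
    hyx.trans (mem_cover.mp hu).2.2⟩

theorem exists_isGreatest_saturated [DecidableEq V] (hx : x ∈ saturated l r S c v) :
    ∃ b, IsGreatest (saturated l r S c v) b := by
  refine exists_isGreatest_of_forall_exists_ge ((insert v S).image r) ⟨x, hx⟩ fun x hx => ?_
  have hC : (insert v (cover l r S x)).Nonempty := insert_nonempty _ _
  set y := (insert v (cover l r S x)).inf' hC r
  obtain ⟨w, hwC, hwy⟩ := exists_mem_eq_inf' hC r
  have hxy : x ≤ y := le_inf' _ _ fun w hw => by
    rcases mem_insert.mp hw with rfl | hw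
    exacts [hx.1.2, (mem_cover.mp hw).2.2]
  refine ⟨y, mem_image.mpr ⟨w, insert_subset_insert v (filter_subset _ _) hwC, hwy.symm⟩,
    ⟨⟨hx.1.1.trans hxy, inf'_le r (mem_insert_self v _)⟩, hx.2.trans (card_le_card fun u hu => ?_)⟩,
    hxy⟩
  exact mem_cover.mpr ⟨(mem_cover.mp hu).1, (mem_cover.mp hu).2.1.trans hxy,
    inf'_le r (mem_insert_of_mem hu)⟩

theorem card_cover_sdiff_le [DecidableEq V] (hS' : #(cover l r S' x) ≤ c)
    (hS : c ≤ #(cover l r S x)) : #(cover l r (S' \ S) x) ≤ #(cover l r (S \ S') x) := by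
  have h := card_cover_sdiff_add_card_cover_inter (l := l) (r := r) (S := S) (T := S') (x := x)
  have h' := card_cover_sdiff_add_card_cover_inter (l := l) (r := r) (S := S') (T := S) (x := x)
  rw [inter_comm] at h'
  omega

/-- Greedy matching in increasing order of `a v`: the intervals of `U` through `a v` that are
already used are matched to vertices of `W` whose intervals also pass through `a v`. -/
theorem exists_injOn_mem_cover [DecidableEq V] {U W : Finset V} {a : V → ℝ}
    (ha : ∀ v ∈ W, a v ∈ Set.Icc (l v) (r v))
    (hr : ∀ v ∈ W, ∀ u ∈ cover l r U (a v), r u ≤ r v)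
    (hcard : ∀ v ∈ W, #(cover l r W (a v)) ≤ #(cover l r U (a v))) :
    ∃ f : V → V, Set.InjOn f W ∧ ∀ v ∈ W, f v ∈ cover l r U (a v) := by
  suffices ∀ W' ⊆ W, ∃ f : V → V, Set.InjOn f W' ∧ ∀ v ∈ W', f v ∈ cover l r U (a v) from
    this W Subset.rfl
  intro W'
  induction W' using Finset.induction_on_max_value a with
  | empty => exact fun _ => ⟨id, by simp, by simp⟩
  | insert v W' hvW' hmax ih =>
    intro hW
    have hvW := hW (mem_insert_self v W')
    obtain ⟨f, hf, hfU⟩ := ih ((subset_insert v W').trans hW)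
    have hused : {w ∈ W' | f w ∈ cover l r U (a v)} ⊆ (cover l r W (a v)).erase v := by
      intro w hw
      obtain ⟨hwW', hfw⟩ := mem_filter.mp hw
      have hwW := hW (mem_insert_of_mem hwW')
      refine mem_erase.mpr ⟨ne_of_mem_of_not_mem hwW' hvW', mem_cover.mpr ⟨hwW, ?_, ?_⟩⟩
      · exact (ha w hwW).1.trans (hmax w hwW')
      · exact (mem_cover.mp hfw).2.2.trans (hr w hwW _ (hfU w hwW'))
    have hv : v ∈ cover l r W (a v) := mem_cover.mpr ⟨hvW, ha v hvW⟩
    obtain ⟨u, hu, hu_unused⟩ := exists_mem_notMem_of_card_lt_card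
      (s := {w ∈ W' | f w ∈ cover l r U (a v)}.image f)
      (card_image_le.trans_lt ((card_le_card hused).trans_lt
        ((card_erase_lt_of_mem hv).trans_le (hcard v hvW))))
    have hfg : Set.EqOn f (Function.update f v u) W' := fun w hw =>
      (Function.update_of_ne (ne_of_mem_of_not_mem hw hvW') u f).symm
    refine ⟨Function.update f v u, ?_, fun w hw => ?_⟩
    · rw [coe_insert, Set.injOn_insert (mem_coe.not.mpr hvW'), ← hfg.image_eq,
        Function.update_self]
      refine ⟨hf.congr hfg, fun ⟨w, hw, hfw⟩ => hu_unused (mem_image.mpr ⟨w, ?_, hfw⟩)⟩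
      exact mem_filter.mpr ⟨hw, hfw ▸ hu⟩
    · rcases mem_insert.mp hw with rfl | hw
      · simpa using hu
      · rw [← hfg hw]
        exact hfU w hw

/-- If every interval of `U` through `a v` ends before `b v`, then the intervals of `U` through
the largest `b v` are never used by the matching of `exists_injOn_mem_cover`. -/
theorem card_lt_card_of_card_cover_le [DecidableEq V] {U W : Finset V} {a b : V → ℝ}
    (hW : W.Nonempty) (ha : ∀ v ∈ W, a v ∈ Set.Icc (l v) (r v))
    (hb : ∀ v ∈ W, b v ∈ Set.Icc (l v) (r v))
    (hr : ∀ v ∈ W, ∀ u ∈ cover l r U (a v), r u < b v)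
    (hcard_a : ∀ v ∈ W, #(cover l r W (a v)) ≤ #(cover l r U (a v)))
    (hcard_b : ∀ v ∈ W, #(cover l r W (b v)) ≤ #(cover l r U (b v))) :
    #W < #U := by
  obtain ⟨v₀, hv₀, hmax⟩ := exists_max_image W b hW
  set A := cover l r U (b v₀)
  have hcover : ∀ v ∈ W, cover l r U (a v) ⊆ cover l r (U \ A) (a v) := fun v hv u hu =>
    mem_cover.mpr ⟨mem_sdiff.mpr ⟨(mem_cover.mp hu).1, fun huA =>
      ((hr v hv u hu).trans_le (hmax v hv)).not_ge (mem_cover.mp huA).2.2⟩, (mem_cover.mp hu).2⟩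
  obtain ⟨f, hf, hfU⟩ := exists_injOn_mem_cover ha
    (fun v hv u hu => ((hr v hv u (cover_mono sdiff_subset hu)).trans_le (hb v hv).2).le)
    (fun v hv => (hcard_a v hv).trans (card_le_card (hcover v hv)))
  have hA : A.Nonempty := card_pos.mp <|
    (card_pos.mpr ⟨v₀, mem_cover.mpr ⟨hv₀, hb v₀ hv₀⟩⟩).trans_le (hcard_b v₀ hv₀)
  calc #W ≤ #(U \ A) := card_le_card_of_injOn f (fun v hv => (mem_cover.mp (hfU v hv)).1) hf
    _ < #U := card_lt_card (sdiff_ssubset (filter_subset _ _) hA)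

namespace IsIntervalModel

variable {G : SimpleGraph V} (hG : IsIntervalModel G l r)
include hG

theorem adj_of_mem (huv : u ≠ v) (hu : x ∈ Set.Icc (l u) (r u)) (hv : x ∈ Set.Icc (l v) (r v)) :
    G.Adj u v :=
  (hG.adj_iff u v).mpr ⟨huv, (max_le hu.1 hv.1).trans (le_min hu.2 hv.2)⟩

theorem card_cover_le (hS : ColSet G c S) (x : ℝ) : #(cover l r S x) ≤ c :=
  hS.card_le_of_isClique (filter_subset _ _) fun _ hu _ hv huv =>
    hG.adj_of_mem huv (mem_cover.mp hu).2 (mem_cover.mp hv).2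

/-- Greedy colouring in order of left endpoints. -/
theorem colSet_of_card_cover_le [DecidableEq V] (h : ∀ x, #(cover l r S x) ≤ c) :
    ColSet G c S := by
  induction S using Finset.induction_on_max_value l with
  | empty => exact colSet_iff_exists_bounded_coloring.mpr ⟨0, by simp, by simp⟩
  | insert v S hvS hmax ih =>
    have hcover := h (l v)
    rw [cover_insert, if_pos ⟨le_rfl, hG.le v⟩,
      card_insert_of_notMem fun hv => hvS (mem_cover.mp hv).1] at hcover
    refine (ih fun x => (card_le_card (cover_mono (subset_insert v S))).trans (h x)).insert
      (N := cover l r S (l v)) (fun w hw hvw => mem_cover.mpr ⟨hw, hmax w hw, ?_⟩) (by omega)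
    have := ((hG.adj_iff v w).mp hvw).2
    exact (le_max_left _ _).trans (this.trans (min_le_right _ _))

theorem exists_le_card_cover_of_not_colSet_insert [DecidableEq V] (hT : ColSet G c T)
    (h : ¬ ColSet G c (insert v T)) : ∃ x ∈ Set.Icc (l v) (r v), c ≤ #(cover l r T x) := by
  by_contra! hlt
  refine h (hG.colSet_of_card_cover_le fun x => ?_)
  rw [cover_insert]
  split_ifs with hx
  exacts [(card_insert_le _ _).trans (hlt x hx), hG.card_cover_le hT x]

theorem card_sdiff_lt_card_sdiff [DecidableEq V] (hS : ColSet G c S) (hS' : ColSet G c S')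
    (hW : (S' \ S).Nonempty) (hadd : ∀ v ∈ S' \ S, ¬ ColSet G c (insert v S))
    (hswap : ∀ u ∈ S \ S', ∀ v ∈ S' \ S, ¬ ColSet G c (insert v (S.erase u))) :
    #(S' \ S) < #(S \ S') := by
  have hne : ∀ v ∈ S' \ S, (saturated l r S c v).Nonempty := fun v hv =>
    (hG.exists_le_card_cover_of_not_colSet_insert hS (hadd v hv)).imp fun _ => id
  have hleast : ∀ v ∈ S' \ S, IsLeast (saturated l r S c v) (sInf (saturated l r S c v)) :=
    fun v hv => by
      obtain ⟨a, ha⟩ := exists_isLeast_saturated (hne v hv).some_mem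
      rwa [ha.csInf_eq]
  have hgreatest : ∀ v ∈ S' \ S, IsGreatest (saturated l r S c v) (sSup (saturated l r S c v)) :=
    fun v hv => by
      obtain ⟨b, hb⟩ := exists_isGreatest_saturated (hne v hv).some_mem
      rwa [hb.csSup_eq]
  have hescape : ∀ u ∈ S \ S', ∀ v ∈ S' \ S,
      ∃ x ∈ saturated l r S c v, x ∉ Set.Icc (l u) (r u) := by
    intro u hu v hv
    -- swapping `v` in for `u` fails at a point that `S` saturates even without `u`
    obtain ⟨x, hxv, hx⟩ := hG.exists_le_card_cover_of_not_colSet_insert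
      (hS.mono (erase_subset u S)) (hswap u hu v hv)
    have hsub : cover l r (S.erase u) x ⊆ cover l r S x := cover_mono (erase_subset u S)
    have heq : cover l r (S.erase u) x = cover l r S x :=
      eq_of_subset_of_card_le hsub (by have := hG.card_cover_le hS x; omega)
    refine ⟨x, ⟨hxv, hx.trans (card_le_card hsub)⟩, fun hxu => ?_⟩
    have hu' : u ∈ cover l r (S.erase u) x := heq ▸ mem_cover.mpr ⟨(mem_sdiff.mp hu).1, hxu⟩
    exact notMem_erase u S (mem_cover.mp hu').1
  refine card_lt_card_of_card_cover_le hW (fun v hv => (hleast v hv).1.1)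
    (fun v hv => (hgreatest v hv).1.1) (fun v hv u hu => ?_)
    (fun v hv => card_cover_sdiff_le (hG.card_cover_le hS' _) (hleast v hv).1.2)
    (fun v hv => card_cover_sdiff_le (hG.card_cover_le hS' _) (hgreatest v hv).1.2)
  obtain ⟨huS, hau⟩ := mem_cover.mp hu
  obtain ⟨x, hx, hxu⟩ := hescape u huS v hv
  have hax := (hleast v hv).2 hx
  have hxb := (hgreatest v hv).2 hx
  simp only [Set.mem_Icc, not_and, not_le] at hxu
  exact (hxu (hau.1.trans hax)).trans_le hxb

end IsIntervalModel

end Interval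

section Reconfiguration

variable [DecidableEq V] {G : SimpleGraph V} {c k : ℕ} {S S' T U : Finset V} {u v : V}
  {t : List (Finset V)}

theorem card_insert_symmDiff_add_one (hv : v ∈ S' \ S) : #(insert v S ∆ S') + 1 = #(S ∆ S') := by
  obtain ⟨hvS', hvS⟩ := mem_sdiff.mp hv
  have : insert v S ∆ S' = (S ∆ S').erase v := by
    ext w
    by_cases hw : w = v <;> simp [mem_symmDiff, hw, hvS, hvS']
  rw [this, card_erase_add_one (mem_symmDiff.mpr (.inr ⟨hvS', hvS⟩))]

theorem card_erase_symmDiff_add_one (hu : u ∈ S \ S') : #(S.erase u ∆ S') + 1 = #(S ∆ S') := by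
  obtain ⟨huS, huS'⟩ := mem_sdiff.mp hu
  have : S.erase u ∆ S' = (S ∆ S').erase u := by
    ext w
    by_cases hw : w = u <;> simp [mem_symmDiff, hw, huS, huS']
  rw [this, card_erase_add_one (mem_symmDiff.mpr (.inl ⟨huS, huS'⟩))]

theorem TARStep.symm (h : TARStep G c k S T) : TARStep G c k T S :=
  ⟨h.2.1, h.1, h.2.2.2.1, h.2.2.1, symmDiff_comm S T ▸ h.2.2.2.2⟩

theorem tarStep_insert (hv : v ∉ S) (hk : k ≤ #S) (h : ColSet G c (insert v S)) :
    TARStep G c k S (insert v S) := by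
  refine ⟨h.mono (subset_insert v S), h, hk, hk.trans (card_le_card (subset_insert v S)), ?_⟩
  rw [symmDiff_of_le (subset_insert v S), card_sdiff_of_subset (subset_insert v S),
    card_insert_of_notMem hv, Nat.add_sub_cancel_left]

theorem tarStep_erase (hu : u ∈ S) (hk : k ≤ #(S.erase u)) (h : ColSet G c S) :
    TARStep G c k S (S.erase u) := by
  have := tarStep_insert (notMem_erase u S) hk (G := G) (c := c)
  rw [insert_erase hu] at this
  exact (this h).symm

theorem tarSeq_singleton : TARSeq G c k S S [S] :=
  ⟨rfl, rfl, List.isChain_singleton S⟩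

theorem TARSeq.cons (h : TARStep G c k S T) (ht : TARSeq G c k T S' t) :
    TARSeq G c k S S' (S :: t) := by
  obtain ⟨hhead, hlast, hchain⟩ := ht
  cases t with
  | nil => simp at hhead
  | cons T' t =>
  obtain rfl : T' = T := by simpa using hhead
  exact ⟨rfl, by rwa [List.getLast?_cons_cons], List.isChain_cons_cons.mpr ⟨h, hchain⟩⟩

theorem TARSeq.reverse (ht : TARSeq G c k S S' t) : TARSeq G c k S' S t.reverse :=
  ⟨by rw [List.head?_reverse]; exact ht.2.1, by rw [List.getLast?_reverse]; exact ht.1,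
    List.isChain_reverse.mpr (ht.2.2.imp fun _ _ h => h.symm)⟩

theorem TARSeq.concat (ht : TARSeq G c k S T t) (h : TARStep G c k T S') :
    TARSeq G c k S S' (t ++ [S']) := by
  simpa using (ht.reverse.cons h.symm).reverse

theorem TARSeq.card_symmDiff_lt_length :
    ∀ {S S' : Finset V} {t : List (Finset V)}, TARSeq G c k S S' t → #(S ∆ S') < t.length
  | _, _, [], ⟨h, _, _⟩ => by simp at h
  | S, S', [A], ⟨h₁, h₂, _⟩ => by
    obtain ⟨rfl, rfl⟩ : A = S ∧ A = S' := ⟨by simpa using h₁, by simpa using h₂⟩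
    simp
  | S, S', A :: B :: t, ⟨h₁, h₂, h₃⟩ => by
    obtain rfl : A = S := by simpa using h₁
    obtain ⟨hstep, hchain⟩ := List.isChain_cons_cons.mp h₃
    have ih := card_symmDiff_lt_length (t := B :: t)
      ⟨rfl, by rwa [List.getLast?_cons_cons] at h₂, hchain⟩
    have htri := (card_le_card (symmDiff_triangle A B S')).trans (card_union_le _ _)
    have := hstep.2.2.2.2
    simp only [List.length_cons] at ih ⊢
    omega

theorem tarDist_eq_of_tarSeq (ht : TARSeq G c k S S' t) (hlen : t.length = #(S ∆ S') + 1) :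
    TARDist G c k S S' = #(S ∆ S') := by
  refine le_antisymm (sInf_le ⟨t, ht, by rw [hlen]; push_cast; rfl⟩) (le_sInf ?_)
  rintro n ⟨t', ht', hlen'⟩
  by_contra! hlt
  obtain ⟨m, rfl⟩ := ENat.ne_top_iff_exists.mp hlt.ne_top
  norm_cast at hlt hlen'
  have := ht'.card_symmDiff_lt_length
  omega

theorem lockedIn_iff :
    LockedIn G c k U S ↔
      #S = k ∧ ColSet G c S ∧ S ⊆ U ∧ ∀ v ∈ U \ S, ¬ ColSet G c (insert v S) := by
  refine ⟨fun ⟨hk, hS, hSU, hmax⟩ => ⟨hk, hS, hSU, fun v hv hvS => ?_⟩,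
    fun ⟨hk, hS, hSU, hadd⟩ => ⟨hk, hS, hSU, fun T hTU hT hST => ?_⟩⟩
  · obtain ⟨hvU, hv⟩ := mem_sdiff.mp hv
    exact hv (hmax _ (insert_subset hvU hSU) hvS (subset_insert v S) ▸ mem_insert_self v S)
  · by_contra hne
    obtain ⟨w, hwT, hwS⟩ := exists_of_ssubset (hST.ssubset_of_ne (Ne.symm hne))
    exact hadd w (mem_sdiff.mpr ⟨hTU hwT, hwS⟩) (hT.mono (insert_subset hwT hST))

theorem LockedIn.not_colSet_insert_erase (hl : LockedIn G c k (S.erase u ∪ S') (S.erase u))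
    (hv : v ∈ S' \ S) : ¬ ColSet G c (insert v (S.erase u)) :=
  (lockedIn_iff.mp hl).2.2.2 v <| mem_sdiff.mpr
    ⟨mem_union_right _ (mem_sdiff.mp hv).1, fun h => (mem_sdiff.mp hv).2 (mem_of_mem_erase h)⟩

structure UnlockedPair (G : SimpleGraph V) (c k : ℕ) (S S' : Finset V) : Prop where
  colSet_left : ColSet G c S
  colSet_right : ColSet G c S'
  le_card_left : k ≤ #S
  le_card_right : k ≤ #S'
  not_lockedIn_left : ¬ LockedIn G c k (S ∪ S') S
  not_lockedIn_right : ¬ LockedIn G c k (S ∪ S') S'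

theorem UnlockedPair.symm (h : UnlockedPair G c k S S') : UnlockedPair G c k S' S :=
  ⟨h.colSet_right, h.colSet_left, h.le_card_right, h.le_card_left,
    union_comm S S' ▸ h.not_lockedIn_right, union_comm S S' ▸ h.not_lockedIn_left⟩

def CloserStep (G : SimpleGraph V) (c k : ℕ) (S S' : Finset V) : Prop :=
  ∃ T, TARStep G c k S T ∧ #(T ∆ S') + 1 = #(S ∆ S') ∧ UnlockedPair G c k T S'

theorem UnlockedPair.closerStep_of_insert (h : UnlockedPair G c k S S') (hv : v ∈ S' \ S)
    (hcol : ColSet G c (insert v S)) : CloserStep G c k S S' := by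
  obtain ⟨hvS', hvS⟩ := mem_sdiff.mp hv
  have hcard : #(insert v S) = #S + 1 := card_insert_of_notMem hvS
  refine ⟨insert v S, tarStep_insert hvS h.le_card_left hcol, card_insert_symmDiff_add_one hv,
    hcol, h.colSet_right, by rw [hcard]; exact h.le_card_left.trans (Nat.le_succ _),
    h.le_card_right, fun hl => by have := hl.1; have := h.le_card_left; omega, ?_⟩
  rw [insert_union, insert_eq_of_mem (mem_union_right S hvS')]
  exact h.not_lockedIn_right

theorem UnlockedPair.closerStep_of_erase (h : UnlockedPair G c k S S') (hu : u ∈ S \ S')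
    (hkS : k < #S) (hkS' : k < #S') (hl : ¬ LockedIn G c k (S.erase u ∪ S') (S.erase u)) :
    CloserStep G c k S S' := by
  have hk : k ≤ #(S.erase u) := by rw [card_erase_of_mem (mem_sdiff.mp hu).1]; omega
  exact ⟨S.erase u, tarStep_erase (mem_sdiff.mp hu).1 hk h.colSet_left,
    card_erase_symmDiff_add_one hu, h.colSet_left.mono (erase_subset u S), h.colSet_right, hk,
    h.le_card_right, hl, fun hl' => hkS'.ne' hl'.1⟩

theorem sdiff_nonempty_of_forall_not_colSet_insert (hS : ColSet G c S) (hne : S ≠ S')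
    (hadd : ∀ u ∈ S \ S', ¬ ColSet G c (insert u S')) : (S' \ S).Nonempty := by
  refine sdiff_nonempty.mpr fun hS'S => ?_
  obtain ⟨u, huS, huS'⟩ := exists_of_ssubset (hS'S.ssubset_of_ne hne.symm)
  exact hadd u (mem_sdiff.mpr ⟨huS, huS'⟩) (hS.mono (insert_subset huS hS'S))

end Reconfiguration

namespace IsIntervalModel

variable [DecidableEq V] {G : SimpleGraph V} {l r : V → ℝ} {c k : ℕ} {S S' : Finset V}

theorem closerStep_or_closerStep (hG : IsIntervalModel G l r) (h : UnlockedPair G c k S S')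
    (hne : S ≠ S') : CloserStep G c k S S' ∨ CloserStep G c k S' S := by
  by_cases hS_add : ∃ v ∈ S' \ S, ColSet G c (insert v S)
  · obtain ⟨v, hv, hcol⟩ := hS_add
    exact .inl (h.closerStep_of_insert hv hcol)
  by_cases hS'_add : ∃ u ∈ S \ S', ColSet G c (insert u S')
  · obtain ⟨u, hu, hcol⟩ := hS'_add
    exact .inr (h.symm.closerStep_of_insert hu hcol)
  push Not at hS_add hS'_add
  have hkS : k < #S := h.le_card_left.lt_of_ne fun hk => h.not_lockedIn_left <|
    lockedIn_iff.mpr ⟨hk.symm, h.colSet_left, subset_union_left, by rwa [union_sdiff_left]⟩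
  have hkS' : k < #S' := h.le_card_right.lt_of_ne fun hk => h.not_lockedIn_right <|
    lockedIn_iff.mpr ⟨hk.symm, h.colSet_right, subset_union_right, by rwa [union_sdiff_right]⟩
  by_cases hS_del : ∃ u ∈ S \ S', ¬ LockedIn G c k (S.erase u ∪ S') (S.erase u)
  · obtain ⟨u, hu, hl⟩ := hS_del
    exact .inl (h.closerStep_of_erase hu hkS hkS' hl)
  by_cases hS'_del : ∃ v ∈ S' \ S, ¬ LockedIn G c k (S'.erase v ∪ S) (S'.erase v)
  · obtain ⟨v, hv, hl⟩ := hS'_del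
    exact .inr (h.symm.closerStep_of_erase hv hkS' hkS hl)
  push Not at hS_del hS'_del
  have hlt := hG.card_sdiff_lt_card_sdiff h.colSet_left h.colSet_right
    (sdiff_nonempty_of_forall_not_colSet_insert h.colSet_left hne hS'_add) hS_add
    fun u hu _ hv => (hS_del u hu).not_colSet_insert_erase hv
  have hlt' := hG.card_sdiff_lt_card_sdiff h.colSet_right h.colSet_left
    (sdiff_nonempty_of_forall_not_colSet_insert h.colSet_right hne.symm hS_add) hS'_add
    fun v hv _ hu => (hS'_del v hv).not_colSet_insert_erase hu
  omega

theorem exists_tarSeq_of_unlockedPair (hG : IsIntervalModel G l r)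
    (h : UnlockedPair G c k S S') : ∃ t, TARSeq G c k S S' t ∧ t.length = #(S ∆ S') + 1 := by
  induction hn : #(S ∆ S') using Nat.strong_induction_on generalizing S S' with
  | _ n ih =>
  obtain rfl | hne := eq_or_ne S S'
  · exact ⟨[S], tarSeq_singleton, by simp [← hn]⟩
  rcases hG.closerStep_or_closerStep h hne with ⟨T, hstep, hcard, hT⟩ | ⟨T, hstep, hcard, hT⟩
  · obtain ⟨t, ht, hlen⟩ := ih _ (by omega) hT rfl
    exact ⟨S :: t, ht.cons hstep, by simp only [List.length_cons]; omega⟩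
  · rw [symmDiff_comm S' S, symmDiff_comm T S] at hcard
    obtain ⟨t, ht, hlen⟩ := ih _ (by omega) hT.symm rfl
    refine ⟨t ++ [S'], ht.concat hstep.symm, ?_⟩
    simp only [List.length_append, List.length_singleton]
    omega

end IsIntervalModel

theorem interval_dist_no_locked {V : Type*} [DecidableEq V]
    (G : SimpleGraph V) (hG : IsIntervalGraph G) (c k : ℕ) (S S' : Finset V)
    (hS : ColSet G c S) (hS' : ColSet G c S')
    (hk : k ≤ S.card) (hk' : k ≤ S'.card)
    (hnl : ¬ LockedIn G c k (S ∪ S') S) (hnl' : ¬ LockedIn G c k (S ∪ S') S') :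
    TARDist G c k S S' = ((symmDiff S S').card : ℕ∞) := by
  obtain ⟨l, r, hlr, hadj⟩ := hG
  obtain ⟨t, ht, hlen⟩ := IsIntervalModel.exists_tarSeq_of_unlockedPair ⟨hlr, hadj⟩
    ⟨hS, hS', hk, hk', hnl, hnl'⟩
  exact tarDist_eq_of_tarSeq ht hlen
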